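/- arXiv:1607.01827 — 7 statements merged into one kernel-verified Lean document; each statement's English description precedes it below -/
import Mathlib

section
/- Let \omega_1,...,\omega_s \in [0,1) be distinct, x_1,...,x_s nonzero complex numbers, and suppose L \ge s and M-L+1 \ge s. Define H_1 = \Phi^{L-1} X (\Phi^{M-L})^T and H_2 = \Phi^{L-1} \Lambda X (\Phi^{M-L})^T, where X = diag(x_j) and \Lambda = diag(e^{-2\pi i \omega_j}). Then the ranges of H_1, H_2, and \Phi^{L-1} coincide, and \Psi = H_1^\dagger H_2 (Moore-Penrose pseudoinverse) is a rank-s matrix satisfying H_2 = H_1 \Psi. -/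
open scoped Real BigOperators
open Matrix

/-- The `(N+1) × s` Vandermonde matrix with entries `e^{-2πi ω_j k}`. -/
noncomputable def vmat (s : ℕ) (ω : Fin s → ℝ) (N : ℕ) : Matrix (Fin (N + 1)) (Fin s) ℂ :=
  Matrix.of fun k j => Complex.exp (-(2 * Real.pi * Complex.I * (ω j) * (k : ℕ)))

/-- The four Penrose conditions characterizing the Moore-Penrose pseudoinverse. -/
def IsMoorePenrose {m n : ℕ} (A : Matrix (Fin m) (Fin n) ℂ) (P : Matrix (Fin n) (Fin m) ℂ) : Prop :=
  A * P * A = A ∧ P * A * P = P ∧ (A * P)ᴴ = A * P ∧ (P * A)ᴴ = P * A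

lemma zexp_inj {s : ℕ} (ω : Fin s → ℝ) (hω : ∀ j, ω j ∈ Set.Ico (0 : ℝ) 1)
    (hinj : Function.Injective ω) :
    Function.Injective (fun j => Complex.exp (-(2 * Real.pi * Complex.I * ω j))) := by
  intro a b hab
  simp only [Complex.exp_eq_exp_iff_exists_int] at hab
  obtain ⟨n, hn⟩ := hab
  apply hinj
  have h2 : (2 * Real.pi * Complex.I) ≠ 0 := by
    simp [Real.pi_ne_zero, Complex.I_ne_zero]
  have : (2 * Real.pi * Complex.I) * (ω a : ℂ) = (2 * Real.pi * Complex.I) * ((ω b : ℂ) - n) := by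
    have := hn
    ring_nf at this ⊢
    linear_combination -this
  have hc : (ω a : ℂ) = (ω b : ℂ) - (n : ℤ) := mul_left_cancel₀ h2 this
  have hr : (ω a : ℝ) = ω b - (n : ℤ) := by exact_mod_cast hc
  have ha := hω a; have hb := hω b
  simp only [Set.mem_Ico] at ha hb
  have : n = 0 := by
    have h1 : (n : ℝ) = ω b - ω a := by linarith
    have : -1 < (n : ℝ) ∧ (n : ℝ) < 1 := by constructor <;> nlinarith
    exact_mod_cast by
      have := this
      have hn1 : (-1 : ℝ) < n := this.1
      have hn2 : (n : ℝ) < 1 := this.2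
      have : -1 < n ∧ n < 1 := ⟨by exact_mod_cast hn1, by exact_mod_cast hn2⟩
      omega
  rw [this] at hr; simpa using hr

lemma vmat_apply_eq_pow {s : ℕ} (ω : Fin s → ℝ) (N : ℕ) (k : Fin (N + 1)) (j : Fin s) :
    vmat s ω N k j = Complex.exp (-(2 * Real.pi * Complex.I * ω j)) ^ (k : ℕ) := by
  rw [vmat, Matrix.of_apply, ← Complex.exp_nat_mul]
  ring_nf

lemma vmat_inj {s : ℕ} (ω : Fin s → ℝ) (hω : ∀ j, ω j ∈ Set.Ico (0 : ℝ) 1)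
    (hinj : Function.Injective ω) (N : ℕ) (h : s ≤ N + 1) :
    Function.Injective (vmat s ω N).mulVecLin := by
  rw [← LinearMap.ker_eq_bot, LinearMap.ker_eq_bot']
  intro v hv
  apply Matrix.eq_zero_of_forall_pow_sum_mul_pow_eq_zero (zexp_inj ω hω hinj)
  intro i
  have := congrFun hv (Fin.castLE h i)
  simp only [Matrix.mulVecLin_apply, Matrix.mulVec, dotProduct, Pi.zero_apply] at this
  rw [← this]
  apply Finset.sum_congr rfl
  intro j _
  rw [vmat_apply_eq_pow]
  simp [mul_comm]

theorem stmt3 (s M L : ℕ) (ω : Fin s → ℝ) (hω : ∀ j, ω j ∈ Set.Ico (0 : ℝ) 1)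
    (hinj : Function.Injective ω) (x : Fin s → ℂ) (hx : ∀ j, x j ≠ 0)
    (hLs : s ≤ L) (hMLs : s ≤ M - L + 1)
    (H1 H2 : Matrix (Fin (L - 1 + 1)) (Fin (M - L + 1)) ℂ)
    (hH1 : H1 = vmat s ω (L - 1) * Matrix.diagonal x * (vmat s ω (M - L))ᵀ)
    (hH2 : H2 = vmat s ω (L - 1) *
      Matrix.diagonal (fun j => Complex.exp (-(2 * Real.pi * Complex.I * ω j))) *
      Matrix.diagonal x * (vmat s ω (M - L))ᵀ)
    (P : Matrix (Fin (M - L + 1)) (Fin (L - 1 + 1)) ℂ) (hP : IsMoorePenrose H1 P) :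
    (LinearMap.range H1.mulVecLin = LinearMap.range H2.mulVecLin ∧
      LinearMap.range H1.mulVecLin = LinearMap.range (vmat s ω (L - 1)).mulVecLin) ∧
    (P * H2).rank = s ∧ H2 = H1 * (P * H2) := by
  set A := vmat s ω (L - 1) with hA
  set V := vmat s ω (M - L) with hV
  set lam : Fin s → ℂ := fun j => Complex.exp (-(2 * Real.pi * Complex.I * ω j)) with hlam
  -- injectivity of A and V
  have hA_inj : Function.Injective A.mulVecLin :=
    vmat_inj ω hω hinj (L - 1) (by omega)
  have hV_inj : Function.Injective V.mulVecLin :=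
    vmat_inj ω hω hinj (M - L) (by omega)
  -- surjectivity of Vᵀ
  have hVT_surj : Function.Surjective (Vᵀ).mulVecLin := by
    rw [← LinearMap.range_eq_top]
    have h1 : Vᵀ.rank = s := by
      rw [Matrix.rank_transpose, Matrix.rank, LinearMap.finrank_range_of_inj hV_inj]
      simp
    have h2 : Module.finrank ℂ (LinearMap.range (Vᵀ).mulVecLin) = s := h1
    apply Submodule.eq_top_of_finrank_eq
    rw [h2]; simp
  -- surjectivity of diagonal matrices
  have hdiag_surj : ∀ (d : Fin s → ℂ), (∀ j, d j ≠ 0) →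
      Function.Surjective (Matrix.diagonal d).mulVecLin := by
    intro d hd w
    refine ⟨fun i => (d i)⁻¹ * w i, ?_⟩
    funext i
    rw [Matrix.mulVecLin_apply, Matrix.mulVec_diagonal, ← mul_assoc,
      mul_inv_cancel₀ (hd i), one_mul]
  have hX_surj := hdiag_surj x hx
  have hΛ_surj := hdiag_surj lam (fun j => Complex.exp_ne_zero _)
  -- range computations
  have hr1 : LinearMap.range H1.mulVecLin = LinearMap.range A.mulVecLin := by
    rw [hH1, Matrix.mulVecLin_mul, Matrix.mulVecLin_mul,
      LinearMap.range_comp_of_range_eq_top _ (LinearMap.range_eq_top.mpr hVT_surj),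
      LinearMap.range_comp_of_range_eq_top _ (LinearMap.range_eq_top.mpr hX_surj)]
  have hr2 : LinearMap.range H2.mulVecLin = LinearMap.range A.mulVecLin := by
    rw [hH2, Matrix.mulVecLin_mul, Matrix.mulVecLin_mul, Matrix.mulVecLin_mul,
      LinearMap.range_comp_of_range_eq_top _ (LinearMap.range_eq_top.mpr hVT_surj),
      LinearMap.range_comp_of_range_eq_top _ (LinearMap.range_eq_top.mpr hX_surj),
      LinearMap.range_comp_of_range_eq_top _ (LinearMap.range_eq_top.mpr hΛ_surj)]
  have hrankH2 : H2.rank = s := by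
    rw [Matrix.rank, hr2, LinearMap.finrank_range_of_inj hA_inj]
    simp
  -- H2 = H1 * (P * H2)
  have key : ∀ w, (H1 * (P * H2)) *ᵥ w = H2 *ᵥ w := by
    intro w
    have hmem : H2 *ᵥ w ∈ LinearMap.range H1.mulVecLin := by
      rw [hr1, ← hr2]
      exact ⟨w, rfl⟩
    obtain ⟨u, hu⟩ := hmem
    rw [Matrix.mulVecLin_apply] at hu
    calc (H1 * (P * H2)) *ᵥ w = H1 *ᵥ (P *ᵥ (H2 *ᵥ w)) := by
          rw [Matrix.mulVec_mulVec, Matrix.mulVec_mulVec, Matrix.mul_assoc]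
      _ = H1 *ᵥ (P *ᵥ (H1 *ᵥ u)) := by rw [hu]
      _ = (H1 * P * H1) *ᵥ u := by rw [Matrix.mulVec_mulVec, Matrix.mulVec_mulVec]
      _ = H1 *ᵥ u := by rw [hP.1]
      _ = H2 *ᵥ w := hu
  have hfact : H2 = H1 * (P * H2) := by
    ext i j
    have := congrFun (key (Pi.single j 1)) i
    simpa using this.symm
  refine ⟨⟨by rw [hr1, hr2], hr1⟩, ?_, hfact⟩
  refine le_antisymm ((Matrix.rank_mul_le_right P H2).trans_eq hrankH2) ?_
  calc s = H2.rank := hrankH2.symm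
    _ = (H1 * (P * H2)).rank := by rw [← hfact]
    _ ≤ (P * H2).rank := Matrix.rank_mul_le_right _ _
end

section
/- Let \omega_1,...,\omega_s \in [0,1) be distinct, x_1,...,x_s nonzero, L \ge s, M-L+1 \ge s, and define H_1 = \Phi^{L-1} X (\Phi^{M-L})^T, H_2 = \Phi^{L-1} \Lambda X (\Phi^{M-L})^T as above. If \Psi is any rank-s matrix with H_2 = H_1 \Psi, then the set of nonzero eigenvalues of \Psi is exactly \{e^{-2\pi i \omega_1}, ..., e^{-2\pi i \omega_s}\}. -/
open scoped Real BigOperators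
open Matrix

/-!
Cancelling the injective Vandermonde factor `Φ^{L-1}` and the invertible `X` from `H₂ = H₁ Ψ`
leaves `Ψᵀ Φ^{M-L} = Φ^{M-L} Λ`: the columns of `Φ^{M-L}`, which are linearly independent because
the nodes `e^{-2πiω_j}` are distinct, are eigenvectors of `Ψᵀ` for these nodes. As `Λ` is
invertible they lie in the range of `Ψᵀ`, and since `rank Ψ = s` they span it; an eigenvector for
a nonzero eigenvalue lies in that range, hence is a combination of them, so its eigenvalue is a
node.
-/

open Function

lemma Complex.injOn_exp_neg_two_pi_I_mul :
    Set.InjOn (fun t : ℝ => Complex.exp (-(2 * π * Complex.I * t))) (Set.Ico 0 1) := by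
  intro a ⟨ha₀, ha₁⟩ b ⟨hb₀, hb₁⟩ h
  have hcirc : Circle.exp (-(2 * π * a)) = Circle.exp (-(2 * π * b)) := by
    ext
    rw [Circle.coe_exp, Circle.coe_exp]
    push_cast
    convert h using 2 <;> ring
  have hmem : ∀ t ∈ Set.Ico (0 : ℝ) 1, -(2 * π * t) ∈ Set.Ioc (-2 * π) 0 :=
    fun t ⟨ht₀, ht₁⟩ => ⟨by nlinarith [Real.pi_pos], by nlinarith [Real.pi_pos]⟩
  have hangle : -(2 * π * a) = -(2 * π * b) :=
    Circle.exp_injOn_Ioc (by simp) (hmem a ⟨ha₀, ha₁⟩) (hmem b ⟨hb₀, hb₁⟩) hcirc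
  nlinarith [Real.pi_pos]

namespace Matrix

variable {K : Type*} [Field K] {l m n : Type*} [Fintype m] [Fintype n]

theorem eq_of_mul_eq_mul_of_injective_mulVec [DecidableEq n] {A : Matrix l m K}
    {C D : Matrix m n K} (hA : Injective A.mulVec) (h : A * C = A * D) : C = D :=
  toLin'.injective <| LinearMap.ext fun v => hA <| by
    simp only [toLin'_apply, mulVec_mulVec, h]

theorem mem_spectrum_iff_exists_mulVec_eq_smul [DecidableEq n] {A : Matrix n n K} {μ : K} :
    μ ∈ spectrum K A ↔ ∃ v ≠ 0, A *ᵥ v = μ • v := by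
  rw [← spectrum_toLin', ← Module.End.hasEigenvalue_iff_mem_spectrum]
  constructor
  · intro h
    obtain ⟨v, hv⟩ := h.exists_hasEigenvector
    exact ⟨v, hv.2, hv.apply_eq_smul⟩
  · rintro ⟨v, hv, h⟩
    exact Module.End.hasEigenvalue_of_hasEigenvector
      ⟨Module.End.mem_eigenspace_iff.mpr (by simpa using h), hv⟩

theorem spectrum_transpose [DecidableEq n] (A : Matrix n n K) :
    spectrum K Aᵀ = spectrum K A := by
  ext μ
  simp only [mem_spectrum_iff_isRoot_charpoly, charpoly_transpose]

theorem injective_mulVec_of_pow {s N : ℕ} {z : Fin s → K} (hz : Injective z) (hs : s ≤ N) :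
    Injective (of fun (k : Fin N) (j : Fin s) => z j ^ (k : ℕ)).mulVec := by
  have hsq : (of fun (k : Fin N) (j : Fin s) => z j ^ (k : ℕ)).submatrix (Fin.castLE hs) id =
      (vandermonde z)ᵀ := by
    ext i j
    simp [vandermonde_apply]
  have hinj : Injective (vandermonde z)ᵀ.mulVec := by
    rw [mulVec_injective_iff_isUnit, isUnit_iff_isUnit_det, det_transpose, isUnit_iff_ne_zero]
    exact det_vandermonde_ne_zero_iff.mpr hz
  intro c d hcd
  apply hinj
  rw [← hsq]
  ext i
  simpa [mulVec, dotProduct] using congrFun hcd (Fin.castLE hs i)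

variable [DecidableEq m]

theorem transpose_mul_eq_mul_diagonal_of_mul_eq [DecidableEq n] {A : Matrix l m K}
    {B : Matrix n m K} {z x : m → K} {Ψ : Matrix n n K} (hA : Injective A.mulVec)
    (hx : ∀ j, x j ≠ 0)
    (h : A * diagonal z * diagonal x * Bᵀ = A * diagonal x * Bᵀ * Ψ) :
    Ψᵀ * B = B * diagonal z := by
  have hcancelA : diagonal z * diagonal x * Bᵀ = diagonal x * Bᵀ * Ψ :=
    eq_of_mul_eq_mul_of_injective_mulVec hA (by simpa only [Matrix.mul_assoc] using h)
  have hX : Injective (diagonal x).mulVec :=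
    mulVec_injective_iff_isUnit.mpr <|
      isUnit_diagonal.mpr <| Pi.isUnit_iff.mpr fun j => (hx j).isUnit
  have hcancelX : diagonal z * Bᵀ = Bᵀ * Ψ := by
    refine eq_of_mul_eq_mul_of_injective_mulVec hX ?_
    rw [← Matrix.mul_assoc, ← Matrix.mul_assoc, ← hcancelA]
    simp only [diagonal_mul_diagonal, mul_comm]
  simpa [transpose_mul] using (congrArg transpose hcancelX).symm

variable {Ψ : Matrix n n K} {B : Matrix n m K} {z : m → K}

theorem range_mulVecLin_eq_of_mul_eq_mul_diagonal (hB : Injective B.mulVec) (hz : ∀ j, z j ≠ 0)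
    (hrank : Ψ.rank ≤ Fintype.card m) (h : Ψ * B = B * diagonal z) :
    LinearMap.range Ψ.mulVecLin = LinearMap.range B.mulVecLin := by
  have hle : LinearMap.range B.mulVecLin ≤ LinearMap.range Ψ.mulVecLin := by
    rintro _ ⟨c, rfl⟩
    refine ⟨B *ᵥ (z⁻¹ * c), ?_⟩
    rw [mulVecLin_apply, mulVec_mulVec, h, ← mulVec_mulVec]
    congr 1
    ext j
    simp [mulVec_diagonal, hz]
  refine (Submodule.eq_of_le_of_finrank_le hle ?_).symm
  rwa [LinearMap.finrank_range_of_inj (f := B.mulVecLin) hB, Module.finrank_fintype_fun_eq_card]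

theorem nonzero_spectrum_eq_range_of_mul_eq_mul_diagonal [DecidableEq n]
    (hB : Injective B.mulVec) (hz : ∀ j, z j ≠ 0) (hrank : Ψ.rank ≤ Fintype.card m)
    (h : Ψ * B = B * diagonal z) :
    {μ | μ ≠ 0 ∧ μ ∈ spectrum K Ψ} = Set.range z := by
  ext μ
  simp only [Set.mem_ofPred_eq]
  constructor
  · rintro ⟨hμ, hspec⟩
    obtain ⟨v, hv, hΨv⟩ := mem_spectrum_iff_exists_mulVec_eq_smul.mp hspec
    have hvB : v ∈ LinearMap.range B.mulVecLin := by
      rw [← range_mulVecLin_eq_of_mul_eq_mul_diagonal hB hz hrank h]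
      exact ⟨μ⁻¹ • v, by simp [hΨv, smul_smul, hμ]⟩
    obtain ⟨c, rfl⟩ := hvB
    rw [← spectrum_diagonal, mem_spectrum_iff_exists_mulVec_eq_smul]
    refine ⟨c, ?_, hB ?_⟩
    · rintro rfl
      simp at hv
    · rw [mulVec_mulVec, ← h, ← mulVec_mulVec, mulVec_smul]
      exact hΨv
  · rintro ⟨j, rfl⟩
    refine ⟨hz j, mem_spectrum_iff_exists_mulVec_eq_smul.mpr ⟨B *ᵥ Pi.single j 1, ?_, ?_⟩⟩
    · rw [← mulVec_zero B]
      exact hB.ne (Pi.single_ne_zero_iff.mpr one_ne_zero)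
    · rw [mulVec_mulVec, h, ← mulVec_mulVec, diagonal_mulVec_single, ← smul_eq_mul,
        Pi.single_smul', mulVec_smul]

end Matrix

theorem vmat_eq_of_pow (s : ℕ) (ω : Fin s → ℝ) (N : ℕ) :
    vmat s ω N =
      of fun (k : Fin (N + 1)) j => Complex.exp (-(2 * π * Complex.I * ω j)) ^ (k : ℕ) := by
  ext k j
  rw [vmat, of_apply, of_apply, ← Complex.exp_nat_mul]
  ring_nf

theorem stmt4 (s M L : ℕ) (ω : Fin s → ℝ) (hω : ∀ j, ω j ∈ Set.Ico (0 : ℝ) 1)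
    (hinj : Function.Injective ω) (x : Fin s → ℂ) (hx : ∀ j, x j ≠ 0)
    (hLs : s ≤ L) (hMLs : s ≤ M - L + 1)
    (H1 H2 : Matrix (Fin (L - 1 + 1)) (Fin (M - L + 1)) ℂ)
    (hH1 : H1 = vmat s ω (L - 1) * Matrix.diagonal x * (vmat s ω (M - L))ᵀ)
    (hH2 : H2 = vmat s ω (L - 1) *
      Matrix.diagonal (fun j => Complex.exp (-(2 * Real.pi * Complex.I * ω j))) *
      Matrix.diagonal x * (vmat s ω (M - L))ᵀ)
    (Ψ : Matrix (Fin (M - L + 1)) (Fin (M - L + 1)) ℂ)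
    (hrank : Ψ.rank = s) (hΨ : H2 = H1 * Ψ) :
    {μ : ℂ | μ ≠ 0 ∧ μ ∈ spectrum ℂ Ψ} =
      Set.range fun j => Complex.exp (-(2 * Real.pi * Complex.I * ω j)) := by
  have hz : Injective fun j => Complex.exp (-(2 * π * Complex.I * ω j)) :=
    fun a b hab => hinj (Complex.injOn_exp_neg_two_pi_I_mul (hω a) (hω b) hab)
  have hvmat : ∀ N, s ≤ N + 1 → Injective (vmat s ω N).mulVec := fun N hN => by
    rw [vmat_eq_of_pow]
    exact injective_mulVec_of_pow hz hN
  have hshift := transpose_mul_eq_mul_diagonal_of_mul_eq (hvmat (L - 1) (by omega)) hx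
    (hH2 ▸ hH1 ▸ hΨ)
  rw [← spectrum_transpose]
  exact nonzero_spectrum_eq_range_of_mul_eq_mul_diagonal (hvmat (M - L) (by omega))
    (fun j => Complex.exp_ne_zero _) (by rw [rank_transpose, hrank, Fintype.card_fin]) hshift
end

section
/- With H_1, H_2, \Lambda, X, \Phi as in the ESPRIT setup (distinct frequencies, nonzero amplitudes, L \ge s, M-L+1 \ge s), if H_2 = H_1 \Psi for some matrix \Psi, then \Phi^{M-L} \Lambda = \Psi^T \Phi^{M-L}; i.e., each column \phi^{M-L}(\omega_j) of \Phi^{M-L} is an eigenvector of \Psi^T with eigenvalue e^{-2\pi i \omega_j}. -/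
open scoped Real BigOperators
open Matrix

lemma vmat_apply (s : ℕ) (ω : Fin s → ℝ) (N : ℕ) (k : Fin (N+1)) (j : Fin s) :
    vmat s ω N k j = (Complex.exp (-(2 * Real.pi * Complex.I * ω j))) ^ (k : ℕ) := by
  rw [vmat, Matrix.of_apply, ← Complex.exp_nat_mul]
  ring_nf

lemma zinj (s : ℕ) (ω : Fin s → ℝ) (hω : ∀ j, ω j ∈ Set.Ico (0 : ℝ) 1)
    (hinj : Function.Injective ω) :
    Function.Injective (fun j => Complex.exp (-(2 * Real.pi * Complex.I * ω j))) := by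
  intro j k h
  apply hinj
  simp only [Complex.exp_eq_exp_iff_exists_int] at h
  obtain ⟨n, hn⟩ := h
  have hπ : (Real.pi : ℂ) ≠ 0 := by exact_mod_cast Real.pi_ne_zero
  have hI := Complex.I_ne_zero
  have hne : (2 * (Real.pi : ℂ) * Complex.I) ≠ 0 := by
    simp [hπ, hI]
  have hkey : (2 * (Real.pi : ℂ) * Complex.I) * (((ω k : ℂ)) - (ω j : ℂ))
      = (2 * (Real.pi : ℂ) * Complex.I) * (n : ℂ) := by
    linear_combination hn
  have h2 : ((ω k - ω j : ℝ) : ℂ) = ((n : ℝ) : ℂ) := by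
    push_cast
    exact mul_left_cancel₀ hne hkey
  have h3 : ω k - ω j = (n : ℝ) := by exact_mod_cast h2
  obtain ⟨h4, h5⟩ := hω j
  obtain ⟨h6, h7⟩ := hω k
  have ha : n < 1 := by exact_mod_cast (by linarith : (n : ℝ) < 1)
  have hb : -1 < n := by exact_mod_cast (by push_cast; linarith : (-1 : ℝ) < (n : ℝ))
  have hn0 : n = 0 := by omega
  rw [hn0] at h3
  push_cast at h3
  linarith

theorem stmt5 (s M L : ℕ) (ω : Fin s → ℝ) (hω : ∀ j, ω j ∈ Set.Ico (0 : ℝ) 1)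
    (hinj : Function.Injective ω) (x : Fin s → ℂ) (hx : ∀ j, x j ≠ 0)
    (hLs : s ≤ L) (hMLs : s ≤ M - L + 1)
    (H1 H2 : Matrix (Fin (L - 1 + 1)) (Fin (M - L + 1)) ℂ)
    (hH1 : H1 = vmat s ω (L - 1) * Matrix.diagonal x * (vmat s ω (M - L))ᵀ)
    (hH2 : H2 = vmat s ω (L - 1) *
      Matrix.diagonal (fun j => Complex.exp (-(2 * Real.pi * Complex.I * ω j))) *
      Matrix.diagonal x * (vmat s ω (M - L))ᵀ)
    (Ψ : Matrix (Fin (M - L + 1)) (Fin (M - L + 1)) ℂ) (hΨ : H2 = H1 * Ψ) :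
    vmat s ω (M - L) *
        Matrix.diagonal (fun j => Complex.exp (-(2 * Real.pi * Complex.I * ω j))) =
      Ψᵀ * vmat s ω (M - L) := by
  set z : Fin s → ℂ := fun j => Complex.exp (-(2 * Real.pi * Complex.I * ω j)) with hz
  have hzinj : Function.Injective z := zinj s ω hω hinj
  have hs1 : s ≤ L - 1 + 1 := by omega
  set Φ := vmat s ω (L - 1) with hΦdef
  set V := vmat s ω (M - L) with hVdef
  have hΦeq : Φ * ((Matrix.diagonal fun i => z i * x i) * Vᵀ)
      = Φ * (Matrix.diagonal x * (Vᵀ * Ψ)) := by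
    rw [hH1, hH2] at hΨ
    simpa [Matrix.mul_assoc] using hΨ
  set W : Matrix (Fin s) (Fin s) ℂ := Φ.submatrix (Fin.castLE hs1) id with hW
  have hWeq : W = (Matrix.vandermonde z)ᵀ := by
    ext i j
    simp [hW, Matrix.vandermonde, hΦdef, vmat_apply, hz]
  have hWdet : W.det ≠ 0 := by
    rw [hWeq, Matrix.det_transpose]
    exact (Matrix.det_vandermonde_ne_zero_iff).2 hzinj
  have cancel : (Matrix.diagonal fun i => z i * x i) * Vᵀ
      = Matrix.diagonal x * (Vᵀ * Ψ) := by
    have hsub : W * ((Matrix.diagonal fun i => z i * x i) * Vᵀ)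
        = W * (Matrix.diagonal x * (Vᵀ * Ψ)) := by
      ext i j
      have h := congrFun (congrFun hΦeq (Fin.castLE hs1 i)) j
      simpa [Matrix.mul_apply, hW] using h
    haveI : Invertible W := W.invertibleOfIsUnitDet (isUnit_iff_ne_zero.2 hWdet)
    exact Matrix.mul_right_injective_of_invertible W hsub
  have hdx : Matrix.diagonal z * Vᵀ = Vᵀ * Ψ := by
    have h1 := congrArg (fun N => Matrix.diagonal (fun j => (x j)⁻¹) * N) cancel
    simp only [← Matrix.mul_assoc, Matrix.diagonal_mul_diagonal] at h1
    have e1 : (fun i => (x i)⁻¹ * (z i * x i)) = z := by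
      funext i; field_simp [hx i]
    have e2 : (fun i => (x i)⁻¹ * x i) = fun _ => (1 : ℂ) := by
      funext i; exact inv_mul_cancel₀ (hx i)
    rw [e1, e2, Matrix.diagonal_one, Matrix.one_mul] at h1
    exact h1
  have h2 := congrArg Matrix.transpose hdx
  simpa [Matrix.transpose_mul, Matrix.diagonal_transpose] using h2
end

section
/- Weyl's perturbation theorem for singular values: if A and B = A + E are complex matrices of the same size with singular values \sigma_1 \ge \sigma_2 \ge ... and \sigma_1^\epsilon \ge \sigma_2^\epsilon \ge ... respectively, then |\sigma_j^\epsilon - \sigma_j| \le \|E\|_2 for every j, where \|E\|_2 is the spectral norm. -/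
open scoped Real BigOperators
open Matrix

/-- The spectral (operator) norm of a complex matrix. -/
noncomputable def sNorm {m n : ℕ} (A : Matrix (Fin m) (Fin n) ℂ) : ℝ :=
  ‖LinearMap.toContinuousLinearMap (Matrix.toEuclideanLin A)‖

/-- The singular values of a complex matrix, in decreasing order:
`svals A j` is the `(j+1)`-st largest singular value, obtained by sorting the
square roots of the eigenvalues of `Aᴴ * A` in decreasing order. -/
noncomputable def svals {m n : ℕ} (A : Matrix (Fin m) (Fin n) ℂ) : Fin n → ℝ :=
  fun j =>
    Real.sqrt ((Matrix.isHermitian_conjTranspose_mul_self A).eigenvalues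
      (Tuple.sort (Matrix.isHermitian_conjTranspose_mul_self A).eigenvalues j.rev))

/-!
In an orthonormal eigenbasis `bᵢ` of `Aᴴ A` with eigenvalues `λᵢ` one has
`‖A x‖² = ∑ λᵢ ‖⟪bᵢ, x⟫‖²`. Hence `‖A x‖ ≥ σⱼ(A) ‖x‖` on the span of the eigenvectors of the
`j + 1` largest eigenvalues, while every subspace of dimension `j + 1` meets the span of the
eigenvectors of the `n - j` smallest ones in some `x ≠ 0`, and there `‖A x‖ ≤ σⱼ(A) ‖x‖`
(Courant–Fischer). Taking the first subspace for `A` and such an `x` in it for `A + E` gives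
`σⱼ(A) ‖x‖ ≤ ‖A x‖ ≤ ‖(A + E) x‖ + ‖E x‖ ≤ (σⱼ(A + E) + ‖E‖₂) ‖x‖`; exchanging the roles of
`A` and `A + E` gives the reverse inequality.
-/

open scoped InnerProductSpace

section InnerProductSpace

variable {𝕜 E ι : Type*} [RCLike 𝕜] [NormedAddCommGroup E] [InnerProductSpace 𝕜 E] [Fintype ι]

theorem LinearMap.IsSymmetric.re_inner_self_eq_sum {T : E →ₗ[𝕜] E} (hT : T.IsSymmetric)
    (b : OrthonormalBasis ι 𝕜 E) {μ : ι → ℝ} (hb : ∀ i, T (b i) = (μ i : 𝕜) • b i) (x : E) :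
    RCLike.re ⟪x, T x⟫_𝕜 = ∑ i, μ i * ‖⟪b i, x⟫_𝕜‖ ^ 2 := by
  rw [← b.sum_inner_mul_inner x (T x), map_sum]
  refine Finset.sum_congr rfl fun i _ => ?_
  rw [← hT, hb, inner_smul_left, RCLike.conj_ofReal, mul_left_comm, RCLike.re_ofReal_mul,
    ← inner_conj_symm, RCLike.conj_mul, ← RCLike.ofReal_pow, RCLike.ofReal_re]

namespace OrthonormalBasis

variable (b : OrthonormalBasis ι 𝕜 E)

theorem inner_eq_zero_of_mem_span_image {s : Set ι} {x : E}
    (hx : x ∈ Submodule.span 𝕜 (b '' s)) {i : ι} (hi : i ∉ s) : ⟪b i, x⟫_𝕜 = 0 := by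
  rw [← b.coe_toBasis, Module.Basis.mem_span_image] at hx
  by_contra h
  exact hi (hx (Finsupp.mem_support_iff.2 (by simpa [b.repr_apply_apply] using h)))

theorem finrank_span_image (s : Finset ι) :
    Module.finrank 𝕜 (Submodule.span 𝕜 (b '' s)) = s.card := by
  rw [Set.image_eq_range]
  exact (finrank_span_eq_card (b.orthonormal.linearIndependent.comp _ Subtype.val_injective)).trans
    (Fintype.card_coe s)

variable {μ : ι → ℝ} {s : Set ι} {c : ℝ} {x : E}

theorem sum_mul_norm_inner_sq_le_of_mem_span_image (hμ : ∀ i ∈ s, μ i ≤ c)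
    (hx : x ∈ Submodule.span 𝕜 (b '' s)) : ∑ i, μ i * ‖⟪b i, x⟫_𝕜‖ ^ 2 ≤ c * ‖x‖ ^ 2 := by
  rw [← b.sum_sq_norm_inner_right x, Finset.mul_sum]
  refine Finset.sum_le_sum fun i _ => ?_
  by_cases hi : i ∈ s
  · exact mul_le_mul_of_nonneg_right (hμ i hi) (sq_nonneg _)
  · simp [b.inner_eq_zero_of_mem_span_image hx hi]

theorem le_sum_mul_norm_inner_sq_of_mem_span_image (hμ : ∀ i ∈ s, c ≤ μ i)
    (hx : x ∈ Submodule.span 𝕜 (b '' s)) : c * ‖x‖ ^ 2 ≤ ∑ i, μ i * ‖⟪b i, x⟫_𝕜‖ ^ 2 := by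
  rw [← b.sum_sq_norm_inner_right x, Finset.mul_sum]
  refine Finset.sum_le_sum fun i _ => ?_
  by_cases hi : i ∈ s
  · exact mul_le_mul_of_nonneg_right (hμ i hi) (sq_nonneg _)
  · simp [b.inner_eq_zero_of_mem_span_image hx hi]

end OrthonormalBasis

end InnerProductSpace

theorem Submodule.inf_ne_bot_of_finrank_lt_add {K V : Type*} [DivisionRing K] [AddCommGroup V]
    [Module K V] [FiniteDimensional K V] {s t : Submodule K V}
    (h : Module.finrank K V < Module.finrank K s + Module.finrank K t) : s ⊓ t ≠ ⊥ := by
  intro hbot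
  have := Submodule.finrank_sup_add_finrank_inf_eq s t
  rw [hbot, finrank_bot, add_zero] at this
  exact (Submodule.finrank_le (s ⊔ t)).not_gt (this ▸ h)

theorem Matrix.norm_toEuclideanLin_sq_eq_sum {𝕜 m n : Type*} [RCLike 𝕜] [Fintype m] [Fintype n]
    [DecidableEq n] (A : Matrix m n 𝕜) (x : EuclideanSpace 𝕜 n) :
    ‖A.toEuclideanLin x‖ ^ 2 = ∑ i, (isHermitian_conjTranspose_mul_self A).eigenvalues i *
      ‖⟪(isHermitian_conjTranspose_mul_self A).eigenvectorBasis i, x⟫_𝕜‖ ^ 2 := by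
  classical
  set hAA := isHermitian_conjTranspose_mul_self A
  have hb : ∀ i, (Aᴴ * A).toEuclideanLin (hAA.eigenvectorBasis i) =
      (hAA.eigenvalues i : 𝕜) • hAA.eigenvectorBasis i := fun i => by
    ext k
    simpa only [Matrix.toLpLin_apply, PiLp.smul_apply, Pi.smul_apply,
      RCLike.real_smul_eq_coe_smul (K := 𝕜)] using congrFun (hAA.mulVec_eigenvectorBasis i) k
  rw [← (isSymmetric_toEuclideanLin_iff.mpr hAA).re_inner_self_eq_sum _ hb,
    Matrix.toLpLin_mul_same, LinearMap.comp_apply, Matrix.toEuclideanLin_conjTranspose_eq_adjoint,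
    LinearMap.adjoint_inner_right, inner_self_eq_norm_sq]

section svals

variable {m n : ℕ} (A : Matrix (Fin m) (Fin n) ℂ)

theorem svals_nonneg (j : Fin n) : 0 ≤ svals A j := Real.sqrt_nonneg _

theorem sq_svals (j : Fin n) :
    svals A j ^ 2 = (isHermitian_conjTranspose_mul_self A).eigenvalues
      (Tuple.sort (isHermitian_conjTranspose_mul_self A).eigenvalues j.rev) :=
  Real.sq_sqrt (eigenvalues_conjTranspose_mul_self_nonneg A _)

theorem exists_finrank_eq_forall_svals_mul_norm_le (j : Fin n) :
    ∃ V : Submodule ℂ (EuclideanSpace ℂ (Fin n)), Module.finrank ℂ V = j + 1 ∧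
      ∀ x ∈ V, svals A j * ‖x‖ ≤ ‖A.toEuclideanLin x‖ := by
  set hAA := isHermitian_conjTranspose_mul_self A
  set σ := Tuple.sort hAA.eigenvalues
  -- `σ` sorts the eigenvalues increasingly, so the `j + 1` largest sit at positions `≥ j.rev`.
  refine ⟨Submodule.span ℂ (hAA.eigenvectorBasis '' ((Finset.Ici j.rev).image σ)), ?_,
    fun x hx => ?_⟩
  · rw [OrthonormalBasis.finrank_span_image, Finset.card_image_of_injective _ σ.injective,
      Fin.card_Ici, Fin.val_rev]
    omega
  · refine (pow_le_pow_iff_left₀ (mul_nonneg (svals_nonneg A j) (norm_nonneg x)) (norm_nonneg _)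
      two_ne_zero).1 ?_
    rw [mul_pow, sq_svals, Matrix.norm_toEuclideanLin_sq_eq_sum]
    refine hAA.eigenvectorBasis.le_sum_mul_norm_inner_sq_of_mem_span_image (fun i hi => ?_) hx
    obtain ⟨k, hk, rfl⟩ := Finset.mem_image.1 hi
    exact Tuple.monotone_sort hAA.eigenvalues (Finset.mem_Ici.1 hk)

theorem exists_mem_ne_zero_norm_le_svals_mul (j : Fin n)
    {V : Submodule ℂ (EuclideanSpace ℂ (Fin n))} (hV : j + 1 ≤ Module.finrank ℂ V) :
    ∃ x ∈ V, x ≠ 0 ∧ ‖A.toEuclideanLin x‖ ≤ svals A j * ‖x‖ := by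
  set hAA := isHermitian_conjTranspose_mul_self A
  set σ := Tuple.sort hAA.eigenvalues
  set W := Submodule.span ℂ (hAA.eigenvectorBasis '' ((Finset.Iic j.rev).image σ))
  have hW : Module.finrank ℂ W = n - j := by
    rw [OrthonormalBasis.finrank_span_image, Finset.card_image_of_injective _ σ.injective,
      Fin.card_Iic, Fin.val_rev]
    omega
  have hVW : V ⊓ W ≠ ⊥ :=
    Submodule.inf_ne_bot_of_finrank_lt_add (by rw [finrank_euclideanSpace_fin, hW]; omega)
  obtain ⟨x, ⟨hxV, hxW⟩, hx⟩ := Submodule.exists_mem_ne_zero_of_ne_bot hVW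
  refine ⟨x, hxV, hx, (pow_le_pow_iff_left₀ (norm_nonneg _)
    (mul_nonneg (svals_nonneg A j) (norm_nonneg x)) two_ne_zero).1 ?_⟩
  rw [mul_pow, sq_svals, Matrix.norm_toEuclideanLin_sq_eq_sum]
  refine hAA.eigenvectorBasis.sum_mul_norm_inner_sq_le_of_mem_span_image (fun i hi => ?_) hxW
  obtain ⟨k, hk, rfl⟩ := Finset.mem_image.1 hi
  exact Tuple.monotone_sort hAA.eigenvalues (Finset.mem_Iic.1 hk)

end svals

section sNorm

variable {m n : ℕ}

theorem norm_toEuclideanLin_le_sNorm_mul (E : Matrix (Fin m) (Fin n) ℂ)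
    (x : EuclideanSpace ℂ (Fin n)) :
    ‖E.toEuclideanLin x‖ ≤ sNorm E * ‖x‖ :=
  (LinearMap.toContinuousLinearMap E.toEuclideanLin).le_opNorm x

theorem sNorm_neg (E : Matrix (Fin m) (Fin n) ℂ) : sNorm (-E) = sNorm E := by
  rw [sNorm, map_neg, map_neg, norm_neg, sNorm]

theorem svals_le_svals_add_sNorm (A E : Matrix (Fin m) (Fin n) ℂ) (j : Fin n) :
    svals A j ≤ svals (A + E) j + sNorm E := by
  obtain ⟨V, hV, hA⟩ := exists_finrank_eq_forall_svals_mul_norm_le A j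
  obtain ⟨x, hxV, hx, hAE⟩ := exists_mem_ne_zero_norm_le_svals_mul (A + E) j hV.ge
  refine le_of_mul_le_mul_right ?_ (norm_pos_iff.2 hx)
  calc svals A j * ‖x‖ ≤ ‖A.toEuclideanLin x‖ := hA x hxV
    _ = ‖(A + E).toEuclideanLin x - E.toEuclideanLin x‖ := by
      rw [map_add, LinearMap.add_apply, add_sub_cancel_right]
    _ ≤ ‖(A + E).toEuclideanLin x‖ + ‖E.toEuclideanLin x‖ := norm_sub_le _ _
    _ ≤ (svals (A + E) j + sNorm E) * ‖x‖ := by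
      rw [add_mul]; exact add_le_add hAE (norm_toEuclideanLin_le_sNorm_mul E x)

end sNorm

theorem stmt7 (m n : ℕ) (A E : Matrix (Fin m) (Fin n) ℂ) (j : Fin n) :
    |svals (A + E) j - svals A j| ≤ sNorm E := by
  have h₁ := svals_le_svals_add_sNorm A E j
  have h₂ := svals_le_svals_add_sNorm (A + E) (-E) j
  rw [add_neg_cancel_right, sNorm_neg] at h₂
  exact abs_sub_le_iff.2 ⟨by linarith, by linarith⟩
end

section
/- (Wedin-type pseudoinverse perturbation) If A and B = A + E are complex matrices of the same size with rank(A) = rank(B), then \|B^\dagger - A^\dagger\|_2 \le ((1+\sqrt{5})/2) \|B^\dagger\|_2 \|A^\dagger\|_2 \|E\|_2. -/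
open scoped Real BigOperators
open Matrix

/-!
Write `B = A + E`. With the orthogonal projections `R = A P` and `S = Q B`, the difference
`Q - P` has the four blocks `S (Q - P) R = -Q E P`, `S (Q - P) (1 - R) = Q (1 - A P)`,
`(1 - S) (Q - P) R = -(1 - Q B) P` and `(1 - S) (Q - P) (1 - R) = 0`. Each nonzero block has
norm at most `η = ‖Q‖ ‖E‖ ‖P‖`. For the third, `(1 - Q B) P = (1 - Q B) (P A) P`, and by the
sin θ theorem (for orthogonal projections `p`, `q` of equal rank, `‖(1 - p) q‖ ≤ ‖(1 - q) p‖`)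
`‖(1 - Q B) P A‖ ≤ ‖(1 - P A) Q B‖ = ‖(1 - P A) Eᴴ Qᴴ‖ ≤ ‖E‖ ‖Q‖`; equal ranks of `P A` and
`Q B` is where `rank A = rank B` enters. The second block is the third one for the adjoints.
Finally, Pythagoras in domain and codomain gives `‖(Q - P) x‖² ≤ η² ((a + b)² + a²)` with
`a² + b² = ‖x‖²`, and `(a + b)² + a² ≤ φ² (a² + b²)`.
-/

open scoped InnerProductSpace goldenRatio
open Module LinearMap

namespace IsStarProjection

variable {𝕜 E : Type*} [RCLike 𝕜] [NormedAddCommGroup E] [InnerProductSpace 𝕜 E]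
  [CompleteSpace E] {p q : E →L[𝕜] E}

theorem apply_apply (hp : IsStarProjection p) (x : E) : p (p x) = p x :=
  congr($hp.isIdempotentElem.eq x)

theorem inner_apply_left (hp : IsStarProjection p) (x y : E) :
    ⟪p x, y⟫_𝕜 = ⟪x, p y⟫_𝕜 :=
  hp.isSelfAdjoint.isSymmetric x y

theorem norm_sq_add_norm_sq (hp : IsStarProjection p) (x : E) :
    ‖p x‖ ^ 2 + ‖(1 - p) x‖ ^ 2 = ‖x‖ ^ 2 := by
  obtain ⟨K, _, rfl⟩ := isStarProjection_iff_eq_starProjection.mp hp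
  rw [← K.starProjection_orthogonal', K.norm_sq_eq_add_norm_sq_starProjection x]

theorem norm_apply_le (hp : IsStarProjection p) (x : E) : ‖p x‖ ≤ ‖x‖ := by
  obtain ⟨K, _, rfl⟩ := isStarProjection_iff_eq_starProjection.mp hp
  exact K.norm_starProjection_apply_le x

/-- `q` is injective on the range of `p`, hence onto the range of `q` by counting dimensions. -/
theorem range_mul_eq_of_norm_lt_one [FiniteDimensional 𝕜 E] (hp : IsStarProjection p)
    (hrank : finrank 𝕜 p.range = finrank 𝕜 q.range) (hc : ‖(1 - q) * p‖ < 1) :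
    (q * p).range = q.range := by
  have hinj : Function.Injective ((q : E →ₗ[𝕜] E).domRestrict p.range) := by
    rw [← ker_eq_bot, ker_eq_bot']
    rintro ⟨_, x, rfl⟩ hx
    have hqx : q (p x) = 0 := by simpa [Subtype.ext_iff] using hx
    have : ‖p x‖ ≤ ‖(1 - q) * p‖ * ‖p x‖ := by
      simpa [hqx, hp.apply_apply] using ((1 - q) * p).le_opNorm (p x)
    have : ‖p x‖ = 0 := by nlinarith [norm_nonneg (p x)]
    exact Subtype.ext (norm_eq_zero.mp this)
  have hmap : (q * p).range = p.range.map (q : E →ₗ[𝕜] E) := by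
    rw [ContinuousLinearMap.mul_def, ContinuousLinearMap.toLinearMap_comp, range_comp]
  refine Submodule.eq_of_le_of_finrank_eq ?_ ?_
  · rw [ContinuousLinearMap.mul_def, ContinuousLinearMap.toLinearMap_comp]
    exact range_comp_le_range _ _
  · rw [hmap, ← range_domRestrict, finrank_range_of_inj hinj, hrank]

/-- With `u = q w`: `‖u‖² = ⟪p u, w⟫ ≤ ‖p u‖ ‖w‖` and `(1 - c²) ‖w‖² ≤ ‖u‖²`, where
`c = ‖(1 - q) p‖`; together they give `(1 - c²) ‖u‖² ≤ ‖p u‖²`. -/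
theorem norm_one_sub_apply_apply_le (hp : IsStarProjection p) (hq : IsStarProjection q)
    {w : E} (hw : p w = w) :
    ‖(1 - p) (q w)‖ ≤ ‖(1 - q) * p‖ * ‖q w‖ := by
  set c := ‖(1 - q) * p‖
  set u := q w
  have hinner : ⟪u, u⟫_𝕜 = ⟪p u, w⟫_𝕜 := by
    rw [hp.inner_apply_left, hw, ← hq.inner_apply_left, hq.apply_apply]
  have hu : ‖u‖ ^ 2 ≤ ‖p u‖ * ‖w‖ := by
    rw [← inner_self_eq_norm_sq (𝕜 := 𝕜), hinner]
    exact (RCLike.re_le_norm _).trans (norm_inner_le_norm _ _)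
  have hw₁ : ‖(1 - q) w‖ ≤ c * ‖w‖ := by
    simpa [hw] using ((1 - q) * p).le_opNorm w
  have hpyth_q := hq.norm_sq_add_norm_sq w
  have hpyth_p := hp.norm_sq_add_norm_sq u
  have h₁ : (1 - c ^ 2) * ‖w‖ ^ 2 ≤ ‖u‖ ^ 2 := by
    nlinarith [mul_self_le_mul_self (norm_nonneg _) hw₁]
  have h₂ : ‖u‖ ^ 2 * ‖u‖ ^ 2 ≤ ‖p u‖ ^ 2 * ‖w‖ ^ 2 := by
    nlinarith [mul_self_le_mul_self (sq_nonneg _) hu]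
  have h₃ : (1 - c ^ 2) * ‖u‖ ^ 2 ≤ ‖p u‖ ^ 2 := by
    rcases (sq_nonneg ‖u‖).eq_or_lt with h0 | hpos
    · nlinarith [sq_nonneg ‖p u‖]
    · refine le_of_mul_le_mul_right ?_ hpos
      nlinarith [mul_le_mul_of_nonneg_left h₁ (sq_nonneg ‖p u‖)]
  refine (pow_le_pow_iff_left₀ (norm_nonneg _) (by positivity) two_ne_zero).mp ?_
  nlinarith

theorem norm_one_sub_mul_le [FiniteDimensional 𝕜 E] (hp : IsStarProjection p)
    (hq : IsStarProjection q) (hrank : finrank 𝕜 p.range = finrank 𝕜 q.range) :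
    ‖(1 - p) * q‖ ≤ ‖(1 - q) * p‖ := by
  rcases le_or_gt 1 ‖(1 - q) * p‖ with hc | hc
  · exact (norm_mul_le _ _).trans <|
      (mul_le_one₀ hp.one_sub.norm_le (norm_nonneg _) hq.norm_le).trans hc
  · refine ((1 - p) * q).opNorm_le_bound (norm_nonneg _) fun x => ?_
    obtain ⟨y, hy⟩ : q x ∈ (q * p).range := by
      rw [hp.range_mul_eq_of_norm_lt_one hrank hc]
      exact mem_range_self _ x
    have hqx : q x = q (p y) := hy.symm
    calc ‖((1 - p) * q) x‖ = ‖(1 - p) (q (p y))‖ := by rw [← hqx]; rfl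
      _ ≤ ‖(1 - q) * p‖ * ‖q x‖ := by
        rw [hqx]; exact hp.norm_one_sub_apply_apply_le hq (hp.apply_apply y)
      _ ≤ ‖(1 - q) * p‖ * ‖x‖ := by gcongr; exact hq.norm_apply_le x

end IsStarProjection

/-- Equality holds at `a = φ b`, so `φ` is the best constant. -/
theorem Real.add_sq_add_sq_le_goldenRatio_sq_mul (a b : ℝ) :
    (a + b) ^ 2 + a ^ 2 ≤ φ ^ 2 * (a ^ 2 + b ^ 2) := by
  have key : φ * (φ ^ 2 * (a ^ 2 + b ^ 2) - ((a + b) ^ 2 + a ^ 2)) = (a - φ * b) ^ 2 := by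
    linear_combination ((φ + 1) * a ^ 2 + φ * b ^ 2) * Real.goldenRatio_sq
  have := (mul_nonneg_iff_of_pos_left Real.goldenRatio_pos).mp (key ▸ sq_nonneg _)
  linarith

namespace ContinuousLinearMap

variable {𝕜 E F : Type*} [RCLike 𝕜] [NormedAddCommGroup E] [InnerProductSpace 𝕜 E]
  [CompleteSpace E] [NormedAddCommGroup F] [InnerProductSpace 𝕜 F] [CompleteSpace F]

theorem norm_le_goldenRatio_mul_of_blocks {T : E →L[𝕜] F} {p : E →L[𝕜] E} {q : F →L[𝕜] F}
    (hp : IsStarProjection p) (hq : IsStarProjection q) {η : ℝ}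
    (h₀ : (1 - q) ∘L T ∘L (1 - p) = 0) (h₁ : ‖q ∘L T ∘L p‖ ≤ η)
    (h₂ : ‖q ∘L T ∘L (1 - p)‖ ≤ η) (h₃ : ‖(1 - q) ∘L T ∘L p‖ ≤ η) :
    ‖T‖ ≤ φ * η := by
  have hη : 0 ≤ η := (norm_nonneg _).trans h₁
  refine T.opNorm_le_bound (by positivity) fun x => ?_
  have hsplit (r : F →L[𝕜] F) :
      r (T x) = (r ∘L T ∘L p) (p x) + (r ∘L T ∘L (1 - p)) ((1 - p) x) := by
    have h1p : (1 - p) ((1 - p) x) = (1 - p) x := hp.one_sub.apply_apply x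
    simp only [comp_apply, hp.apply_apply, h1p, ← map_add]
    simp
  have hq_le : ‖q (T x)‖ ≤ η * ‖p x‖ + η * ‖(1 - p) x‖ := by
    rw [hsplit]
    refine (norm_add_le _ _).trans (add_le_add ?_ ?_)
    · exact ((q ∘L T ∘L p).le_opNorm _).trans (by gcongr)
    · exact ((q ∘L T ∘L (1 - p)).le_opNorm _).trans (by gcongr)
  have hq'_le : ‖(1 - q) (T x)‖ ≤ η * ‖p x‖ := by
    rw [hsplit, h₀, _root_.zero_apply, add_zero]
    exact (((1 - q) ∘L T ∘L p).le_opNorm _).trans (by gcongr)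
  refine (pow_le_pow_iff_left₀ (norm_nonneg _) (by positivity) two_ne_zero).mp ?_
  calc ‖T x‖ ^ 2 = ‖q (T x)‖ ^ 2 + ‖(1 - q) (T x)‖ ^ 2 := (hq.norm_sq_add_norm_sq _).symm
    _ ≤ (η * ‖p x‖ + η * ‖(1 - p) x‖) ^ 2 + (η * ‖p x‖) ^ 2 := by gcongr
    _ ≤ φ ^ 2 * ((η * ‖p x‖) ^ 2 + (η * ‖(1 - p) x‖) ^ 2) :=
      Real.add_sq_add_sq_le_goldenRatio_sq_mul _ _
    _ = (φ * η * ‖x‖) ^ 2 := by rw [mul_pow _ ‖x‖, ← hp.norm_sq_add_norm_sq x]; ring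

end ContinuousLinearMap

namespace Matrix

open scoped Matrix.Norms.L2Operator

variable {𝕜 : Type*} [RCLike 𝕜] {l m n : Type*} [Fintype l] [Fintype m] [Fintype n]
  [DecidableEq l] [DecidableEq m] [DecidableEq n]

theorem rank_eq_finrank_range_toEuclideanCLM (R : Matrix n n 𝕜) :
    R.rank = finrank 𝕜 (toEuclideanCLM (𝕜 := 𝕜) R).range :=
  R.rank_eq_finrank_range_toLin (EuclideanSpace.basisFun n 𝕜).toBasis
    (EuclideanSpace.basisFun n 𝕜).toBasis

theorem one_sub_toEuclideanCLM (R : Matrix n n 𝕜) :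
    1 - toEuclideanCLM (𝕜 := 𝕜) R = toEuclideanCLM (𝕜 := 𝕜) (1 - R) := by
  simp

theorem l2_opNorm_mul_le_of_isStarProjection {R : Matrix n n 𝕜} (hR : IsStarProjection R)
    (X : Matrix n l 𝕜) : ‖R * X‖ ≤ ‖X‖ :=
  (l2_opNorm_mul R X).trans (mul_le_of_le_one_left (norm_nonneg _) hR.norm_le)

theorem l2_opNorm_one_sub_mul_le {R S : Matrix n n 𝕜} (hR : IsStarProjection R)
    (hS : IsStarProjection S) (hrank : R.rank = S.rank) :
    ‖(1 - R) * S‖ ≤ ‖(1 - S) * R‖ := by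
  have h := (hR.map (toEuclideanCLM (𝕜 := 𝕜))).norm_one_sub_mul_le (hS.map _)
    (by rwa [← rank_eq_finrank_range_toEuclideanCLM, ← rank_eq_finrank_range_toEuclideanCLM])
  rwa [one_sub_toEuclideanCLM, one_sub_toEuclideanCLM, ← map_mul, ← map_mul,
    l2_opNorm_toEuclideanCLM, l2_opNorm_toEuclideanCLM] at h

theorem l2_opNorm_le_goldenRatio_mul_of_blocks {D : Matrix n m 𝕜} {R : Matrix m m 𝕜}
    {S : Matrix n n 𝕜} (hR : IsStarProjection R) (hS : IsStarProjection S) {η : ℝ}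
    (h₀ : (1 - S) * D * (1 - R) = 0) (h₁ : ‖S * D * R‖ ≤ η) (h₂ : ‖S * D * (1 - R)‖ ≤ η)
    (h₃ : ‖(1 - S) * D * R‖ ≤ η) : ‖D‖ ≤ φ * η := by
  set T := (toEuclideanLin D).toContinuousLinearMap
  have hnorm (X : Matrix n n 𝕜) (Z : Matrix m m 𝕜) :
      ‖X * D * Z‖ = ‖toEuclideanCLM (𝕜 := 𝕜) X ∘L T ∘L toEuclideanCLM (𝕜 := 𝕜) Z‖ := by
    rw [l2_opNorm_def]
    congr 1
    ext1 x
    simp only [T, LinearEquiv.trans_apply, toLpLin_mul_same, coe_toContinuousLinearMap',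
      coe_comp, Function.comp_apply, ContinuousLinearMap.comp_apply]
    rfl
  refine ContinuousLinearMap.norm_le_goldenRatio_mul_of_blocks (T := T)
    (hR.map (toEuclideanCLM (𝕜 := 𝕜))) (hS.map (toEuclideanCLM (𝕜 := 𝕜))) ?_ ?_ ?_ ?_
  · rw [one_sub_toEuclideanCLM, one_sub_toEuclideanCLM, ← norm_eq_zero, ← hnorm, h₀,
      norm_zero]
  · exact (hnorm S R).symm.trans_le h₁
  · rw [one_sub_toEuclideanCLM]
    exact (hnorm S (1 - R)).symm.trans_le h₂
  · rw [one_sub_toEuclideanCLM]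
    exact (hnorm (1 - S) R).symm.trans_le h₃

end Matrix

namespace IsMoorePenrose

open scoped Matrix.Norms.L2Operator ComplexOrder

variable {m n : ℕ} {A B : Matrix (Fin m) (Fin n) ℂ} {P Q : Matrix (Fin n) (Fin m) ℂ}

theorem symm (h : IsMoorePenrose A P) : IsMoorePenrose P A :=
  ⟨h.2.1, h.1, h.2.2.2, h.2.2.1⟩

theorem conjTranspose (h : IsMoorePenrose A P) : IsMoorePenrose Aᴴ Pᴴ := by
  obtain ⟨h₁, h₂, h₃, h₄⟩ := h
  refine ⟨?_, ?_, ?_, ?_⟩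
  · rw [← conjTranspose_mul, ← conjTranspose_mul, ← Matrix.mul_assoc, h₁]
  · rw [← conjTranspose_mul, ← conjTranspose_mul, ← Matrix.mul_assoc, h₂]
  · rw [← conjTranspose_mul, h₄, h₄]
  · rw [← conjTranspose_mul, h₃, h₃]

theorem isStarProjection_mul (h : IsMoorePenrose A P) : IsStarProjection (A * P) :=
  ⟨by rw [IsIdempotentElem, ← Matrix.mul_assoc, h.1], h.2.2.1⟩

theorem rank_mul (h : IsMoorePenrose A P) : (A * P).rank = A.rank :=
  le_antisymm (rank_mul_le_left _ _) <| by
    calc A.rank = (A * P * A).rank := by rw [h.1]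
      _ ≤ (A * P).rank := rank_mul_le_left _ _

theorem rank_eq (h : IsMoorePenrose A P) : P.rank = A.rank :=
  le_antisymm (h.symm.rank_mul ▸ rank_mul_le_right P A) (h.rank_mul ▸ rank_mul_le_right A P)

theorem one_sub_mul_mul_conjTranspose_eq_zero (h : IsMoorePenrose A P) : (1 - P * A) * Aᴴ = 0 := by
  have : A * (1 - P * A) = 0 := by
    rw [Matrix.mul_sub, Matrix.mul_one, ← Matrix.mul_assoc, h.1, sub_self]
  rw [← h.symm.isStarProjection_mul.one_sub.isSelfAdjoint.star_eq, star_eq_conjTranspose,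
    ← conjTranspose_mul, this, conjTranspose_zero]

theorem norm_one_sub_mul_mul_le (hP : IsMoorePenrose A P) (hQ : IsMoorePenrose B Q)
    (hrank : B.rank = A.rank) : ‖(1 - Q * B) * P‖ ≤ ‖B - A‖ * ‖Q‖ * ‖P‖ := by
  have hsin : ‖(1 - Q * B) * (P * A)‖ ≤ ‖(1 - P * A) * (Q * B)‖ :=
    l2_opNorm_one_sub_mul_le hQ.symm.isStarProjection_mul hP.symm.isStarProjection_mul
      (by rw [hQ.symm.rank_mul, hP.symm.rank_mul, hQ.rank_eq, hP.rank_eq, hrank])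
  have hid : (1 - P * A) * (Q * B) = (1 - P * A) * ((B - A)ᴴ * Qᴴ) := by
    rw [conjTranspose_sub, Matrix.sub_mul Bᴴ, Matrix.mul_sub, ← Matrix.mul_assoc _ Aᴴ,
      hP.one_sub_mul_mul_conjTranspose_eq_zero, Matrix.zero_mul, sub_zero, ← conjTranspose_mul,
      hQ.2.2.2]
  calc ‖(1 - Q * B) * P‖ = ‖(1 - Q * B) * (P * A) * P‖ := by
        rw [Matrix.mul_assoc _ (P * A), hP.2.1]
    _ ≤ ‖(1 - Q * B) * (P * A)‖ * ‖P‖ := l2_opNorm_mul _ _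
    _ ≤ ‖(1 - P * A) * ((B - A)ᴴ * Qᴴ)‖ * ‖P‖ := by rw [← hid]; gcongr
    _ ≤ ‖(B - A)ᴴ * Qᴴ‖ * ‖P‖ := by
        gcongr
        exact l2_opNorm_mul_le_of_isStarProjection hP.symm.isStarProjection_mul.one_sub _
    _ ≤ ‖B - A‖ * ‖Q‖ * ‖P‖ := by
        gcongr
        exact (l2_opNorm_mul _ _).trans_eq
          (by rw [l2_opNorm_conjTranspose, l2_opNorm_conjTranspose])

theorem norm_mul_one_sub_mul_le (hP : IsMoorePenrose A P) (hQ : IsMoorePenrose B Q)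
    (hrank : B.rank = A.rank) : ‖Q * (1 - A * P)‖ ≤ ‖B - A‖ * ‖Q‖ * ‖P‖ := by
  have h := hQ.conjTranspose.norm_one_sub_mul_mul_le hP.conjTranspose
    (by rw [rank_conjTranspose, rank_conjTranspose, hrank])
  rw [← conjTranspose_sub, l2_opNorm_conjTranspose, l2_opNorm_conjTranspose,
    l2_opNorm_conjTranspose, norm_sub_rev, mul_right_comm] at h
  rwa [← l2_opNorm_conjTranspose, conjTranspose_mul, conjTranspose_sub, conjTranspose_one,
    conjTranspose_mul]

theorem norm_sub_le (hP : IsMoorePenrose A P) (hQ : IsMoorePenrose B Q)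
    (hrank : B.rank = A.rank) : ‖Q - P‖ ≤ φ * (‖B - A‖ * ‖Q‖ * ‖P‖) := by
  have hQBQ : Q * B * (Q - P) = Q - Q * B * P := by rw [Matrix.mul_sub, hQ.2.1]
  have hQBQ' : (1 - Q * B) * (Q - P) = -((1 - Q * B) * P) := by
    rw [Matrix.sub_mul, hQBQ, Matrix.one_mul, Matrix.sub_mul, Matrix.one_mul]; abel
  have hPAP : P * (A * P) = P := by rw [← Matrix.mul_assoc, hP.2.1]
  have hP_one_sub : P * (1 - A * P) = 0 := by
    rw [Matrix.mul_sub, Matrix.mul_one, hPAP, sub_self]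
  refine l2_opNorm_le_goldenRatio_mul_of_blocks hP.isStarProjection_mul
    hQ.symm.isStarProjection_mul ?_ ?_ ?_ ?_
  · rw [hQBQ', Matrix.neg_mul, Matrix.mul_assoc, hP_one_sub, Matrix.mul_zero, neg_zero]
  · have : Q * B * (Q - P) * (A * P) = -(Q * (B - A) * P) := by
      rw [hQBQ, Matrix.sub_mul, Matrix.mul_assoc (Q * B), hPAP, Matrix.mul_sub, Matrix.sub_mul,
        Matrix.mul_assoc Q A P]
      abel
    rw [this, norm_neg, mul_comm ‖B - A‖]
    exact (l2_opNorm_mul _ _).trans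
      (mul_le_mul_of_nonneg_right (l2_opNorm_mul _ _) (norm_nonneg _))
  · rw [hQBQ, Matrix.sub_mul, Matrix.mul_assoc (Q * B), hP_one_sub, Matrix.mul_zero, sub_zero]
    exact hP.norm_mul_one_sub_mul_le hQ hrank
  · rw [hQBQ', Matrix.neg_mul, norm_neg, Matrix.mul_assoc, hPAP]
    exact hP.norm_one_sub_mul_mul_le hQ hrank

end IsMoorePenrose

theorem stmt10 (m n : ℕ) (A E : Matrix (Fin m) (Fin n) ℂ)
    (P Q : Matrix (Fin n) (Fin m) ℂ)
    (hP : IsMoorePenrose A P) (hQ : IsMoorePenrose (A + E) Q)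
    (hrank : (A + E).rank = A.rank) :
    sNorm (Q - P) ≤ (1 + Real.sqrt 5) / 2 * sNorm Q * sNorm P * sNorm E := by
  have h := hP.norm_sub_le hQ hrank
  rw [add_sub_cancel_left] at h
  calc sNorm (Q - P) ≤ φ * (sNorm E * sNorm Q * sNorm P) := h
    _ = (1 + Real.sqrt 5) / 2 * sNorm Q * sNorm P * sNorm E := by ring
end

section
/- If A \in \mathbb{C}^{m \times s} and B \in \mathbb{C}^{n \times s} satisfy \|A z\|_2 \ge a \|z\|_2 and \|B z\|_2 \ge b \|z\|_2 for all z \in \mathbb{C}^s (with a, b > 0), and X = diag(x_1,...,x_s) with all |x_j| \ge x_{min} > 0, then the s-th largest singular value of the m \times n matrix A X B^T is at least a b x_{min}. -/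
open scoped Real BigOperators
open Matrix

/-! The `s`-th singular value of `M` is at least `c` as soon as `‖M z‖ ≥ c ‖z‖` on an
`s`-dimensional subspace: this is the easy half of Courant–Fischer, since such a subspace meets
the span of the eigenvectors of `Mᴴ * M` for its `n - s + 1` smallest eigenvalues.

For `M = A X Bᵀ` take the range of the entrywise conjugate `B̄`, which is `s`-dimensional because
`B` is bounded below. As `Bᵀ = B̄ᴴ`, Cauchy–Schwarz gives
`‖B̄ w‖² = re ⟪Bᵀ B̄ w, w⟫ ≤ ‖Bᵀ B̄ w‖ ‖w‖ ≤ ‖Bᵀ B̄ w‖ ‖B̄ w‖ / b`, so `Bᵀ` stretches that range by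
at least `b`; then `X` stretches by at least `xmin` and `A` by at least `a`. -/

theorem Submodule.exists_ne_zero_forall_eq_zero_of_card_lt {K E ι : Type*} [Field K]
    [AddCommGroup E] [Module K E] [Fintype ι] (f : ι → E →ₗ[K] K) (V : Submodule K E)
    [FiniteDimensional K V] (h : Fintype.card ι < Module.finrank K V) :
    ∃ z ∈ V, z ≠ 0 ∧ ∀ i, f i z = 0 := by
  have hker := LinearMap.ker_ne_bot_of_finrank_lt
    (f := LinearMap.pi fun i => f i ∘ₗ V.subtype) (by simpa using h)
  obtain ⟨z, hz, hz0⟩ := Submodule.exists_mem_ne_zero_of_ne_bot hker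
  refine ⟨z, z.2, by simpa using hz0, fun i => ?_⟩
  simpa using congrFun (LinearMap.mem_ker.mp hz) i

section Hermitian

variable {𝕜 : Type*} [RCLike 𝕜] {n : ℕ} {H : Matrix (Fin n) (Fin n) 𝕜}

theorem Matrix.IsHermitian.toEuclideanLin_eigenvectorBasis (hH : H.IsHermitian) (i : Fin n) :
    toEuclideanLin H (hH.eigenvectorBasis i) = (hH.eigenvalues i : 𝕜) • hH.eigenvectorBasis i := by
  rw [toLpLin_apply, hH.mulVec_eigenvectorBasis, RCLike.real_smul_eq_coe_smul (K := 𝕜)]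
  rfl

theorem Matrix.IsHermitian.re_inner_toEuclideanLin_self (hH : H.IsHermitian)
    (z : EuclideanSpace 𝕜 (Fin n)) :
    RCLike.re (inner 𝕜 z (toEuclideanLin H z)) =
      ∑ i, hH.eigenvalues i * ‖inner 𝕜 (hH.eigenvectorBasis i) z‖ ^ 2 := by
  have hsymm := isSymmetric_toEuclideanLin_iff.mpr hH
  rw [← hH.eigenvectorBasis.sum_inner_mul_inner, map_sum]
  refine Finset.sum_congr rfl fun i _ => ?_
  rw [← hsymm, hH.toEuclideanLin_eigenvectorBasis, inner_smul_left, RCLike.conj_ofReal,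
    ← inner_conj_symm z, mul_left_comm, RCLike.conj_mul, ← RCLike.ofReal_pow, ← RCLike.ofReal_mul,
    RCLike.ofReal_re]

theorem Matrix.IsHermitian.le_eigenvalues_sort (hH : H.IsHermitian) (k : Fin n) {c : ℝ}
    (V : Submodule 𝕜 (EuclideanSpace 𝕜 (Fin n))) (hV_dim : n ≤ k + Module.finrank 𝕜 V)
    (hV : ∀ z ∈ V, c * ‖z‖ ^ 2 ≤ RCLike.re (inner 𝕜 z (toEuclideanLin H z))) :
    c ≤ hH.eigenvalues (Tuple.sort hH.eigenvalues k) := by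
  set σ := Tuple.sort hH.eigenvalues
  set t := (Finset.Iic k).image σ
  have ht : t.card = k + 1 := by
    rw [Finset.card_image_of_injective _ σ.injective, Fin.card_Iic]
  obtain ⟨z, hzV, hz0, hzt⟩ := V.exists_ne_zero_forall_eq_zero_of_card_lt
    (fun i : ↥(tᶜ) => innerₛₗ 𝕜 (hH.eigenvectorBasis i)) (by
      simp only [Fintype.card_coe, Finset.card_compl, Fintype.card_fin, ht]; omega)
  have hle : RCLike.re (inner 𝕜 z (toEuclideanLin H z)) ≤ hH.eigenvalues (σ k) * ‖z‖ ^ 2 := by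
    rw [hH.re_inner_toEuclideanLin_self, ← hH.eigenvectorBasis.sum_sq_norm_inner_right,
      Finset.mul_sum]
    refine Finset.sum_le_sum fun i _ => ?_
    by_cases hi : i ∈ t
    · obtain ⟨j, hj, rfl⟩ := Finset.mem_image.mp hi
      gcongr
      exact Tuple.monotone_sort hH.eigenvalues (Finset.mem_Iic.mp hj)
    · have hzi : inner 𝕜 (hH.eigenvectorBasis i) z = 0 := hzt ⟨i, Finset.mem_compl.mpr hi⟩
      simp [hzi]
  exact le_of_mul_le_mul_right ((hV z hzV).trans hle) (by positivity)

end Hermitian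

theorem Matrix.re_inner_toEuclideanLin_conjTranspose_mul_self {𝕜 : Type*} [RCLike 𝕜]
    {m n : ℕ} (M : Matrix (Fin m) (Fin n) 𝕜) (z : EuclideanSpace 𝕜 (Fin n)) :
    RCLike.re (inner 𝕜 z (toEuclideanLin (Mᴴ * M) z)) = ‖toEuclideanLin M z‖ ^ 2 := by
  rw [toLpLin_mul_same, LinearMap.comp_apply, toEuclideanLin_conjTranspose_eq_adjoint,
    LinearMap.adjoint_inner_right, inner_self_eq_norm_sq]

theorem le_svals_of_forall_mem_le_norm {m n : ℕ} (M : Matrix (Fin m) (Fin n) ℂ) (k : Fin n) {c : ℝ}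
    (V : Submodule ℂ (EuclideanSpace ℂ (Fin n))) (hV_dim : k + 1 ≤ Module.finrank ℂ V)
    (hV : ∀ z ∈ V, c * ‖z‖ ≤ ‖toEuclideanLin M z‖) :
    c ≤ svals M k := by
  rcases lt_or_ge c 0 with hc | hc
  · exact hc.le.trans (Real.sqrt_nonneg _)
  refine Real.le_sqrt_of_sq_le ((isHermitian_conjTranspose_mul_self M).le_eigenvalues_sort _ V
    (by rw [Fin.val_rev]; omega) fun z hz => ?_)
  rw [re_inner_toEuclideanLin_conjTranspose_mul_self, ← mul_pow]
  gcongr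
  exact hV z hz

theorem LinearMap.injective_of_mul_norm_le {𝕜 E F : Type*} [NormedField 𝕜]
    [NormedAddCommGroup E] [NormedAddCommGroup F] [NormedSpace 𝕜 E] [NormedSpace 𝕜 F]
    (T : E →ₗ[𝕜] F) {b : ℝ} (hb : 0 < b) (hT : ∀ v, b * ‖v‖ ≤ ‖T v‖) :
    Function.Injective T := by
  refine (injective_iff_map_eq_zero T).mpr fun v hv => norm_le_zero_iff.mp ?_
  have := hT v
  rw [hv, norm_zero] at this
  nlinarith [norm_nonneg v]

theorem LinearMap.mul_norm_le_norm_adjoint_apply {𝕜 E F : Type*} [RCLike 𝕜]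
    [NormedAddCommGroup E] [NormedAddCommGroup F] [InnerProductSpace 𝕜 E] [InnerProductSpace 𝕜 F]
    [FiniteDimensional 𝕜 E] [FiniteDimensional 𝕜 F] (T : E →ₗ[𝕜] F) {b : ℝ}
    (hT : ∀ v, b * ‖v‖ ≤ ‖T v‖) (v : E) :
    b * ‖T v‖ ≤ ‖T.adjoint (T v)‖ := by
  have hCS : ‖T v‖ ^ 2 ≤ ‖T.adjoint (T v)‖ * ‖v‖ := by
    rw [← inner_self_eq_norm_sq (𝕜 := 𝕜), ← T.adjoint_inner_left]
    exact (RCLike.re_le_norm _).trans (norm_inner_le_norm _ _)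
  rcases le_or_gt b 0 with hb | hb
  · exact (mul_nonpos_of_nonpos_of_nonneg hb (norm_nonneg _)).trans (norm_nonneg _)
  rcases (norm_nonneg (T v)).eq_or_lt with h0 | hpos
  · rw [← h0, mul_zero]
    exact norm_nonneg _
  refine le_of_mul_le_mul_right ?_ hpos
  calc b * ‖T v‖ * ‖T v‖ = b * ‖T v‖ ^ 2 := by ring
    _ ≤ b * (‖T.adjoint (T v)‖ * ‖v‖) := by gcongr
    _ = ‖T.adjoint (T v)‖ * (b * ‖v‖) := by ring
    _ ≤ ‖T.adjoint (T v)‖ * ‖T v‖ := by gcongr; exact hT v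

section Conjugation

variable {𝕜 ι κ : Type*} [RCLike 𝕜] [Fintype ι]

def EuclideanSpace.starVec (v : EuclideanSpace 𝕜 ι) : EuclideanSpace 𝕜 ι :=
  WithLp.toLp 2 (star (WithLp.ofLp v))

theorem EuclideanSpace.norm_starVec (v : EuclideanSpace 𝕜 ι) : ‖v.starVec‖ = ‖v‖ := by
  simp [EuclideanSpace.norm_eq, EuclideanSpace.starVec]

variable [DecidableEq ι]

theorem Matrix.toEuclideanLin_map_star_apply (B : Matrix κ ι 𝕜) (w : EuclideanSpace 𝕜 ι) :
    toEuclideanLin (B.map star) w = (toEuclideanLin B w.starVec).starVec := by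
  ext i
  simp [EuclideanSpace.starVec, toLpLin_apply, mulVec, dotProduct, star_sum, mul_comm]

variable [Fintype κ]

theorem Matrix.mul_norm_le_norm_toEuclideanLin_map_star (B : Matrix κ ι 𝕜) {b : ℝ}
    (hB : ∀ w, b * ‖w‖ ≤ ‖toEuclideanLin B w‖) (w : EuclideanSpace 𝕜 ι) :
    b * ‖w‖ ≤ ‖toEuclideanLin (B.map star) w‖ := by
  rw [toEuclideanLin_map_star_apply, EuclideanSpace.norm_starVec, ← w.norm_starVec]
  exact hB _

variable [DecidableEq κ]

theorem Matrix.mul_norm_le_norm_toEuclideanLin_transpose (B : Matrix κ ι 𝕜) {b : ℝ}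
    (hB : ∀ w, b * ‖w‖ ≤ ‖toEuclideanLin B w‖) (w : EuclideanSpace 𝕜 ι) :
    b * ‖toEuclideanLin (B.map star) w‖ ≤
      ‖toEuclideanLin Bᵀ (toEuclideanLin (B.map star) w)‖ := by
  have hBt : Bᵀ = (B.map star)ᴴ := by ext; simp
  rw [hBt, toEuclideanLin_conjTranspose_eq_adjoint]
  exact LinearMap.mul_norm_le_norm_adjoint_apply _ (B.mul_norm_le_norm_toEuclideanLin_map_star hB) w

end Conjugation

theorem Matrix.mul_norm_le_norm_toEuclideanLin_diagonal {𝕜 ι : Type*} [RCLike 𝕜] [Fintype ι]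
    [DecidableEq ι] {x : ι → 𝕜} {c : ℝ} (hc : 0 ≤ c) (hx : ∀ i, c ≤ ‖x i‖)
    (v : EuclideanSpace 𝕜 ι) :
    c * ‖v‖ ≤ ‖toEuclideanLin (diagonal x) v‖ := by
  rw [EuclideanSpace.norm_eq, EuclideanSpace.norm_eq, ← Real.sqrt_sq hc,
    ← Real.sqrt_mul (sq_nonneg c), Finset.mul_sum]
  gcongr with i
  simp only [toLpLin_apply, mulVec_diagonal, norm_mul, mul_pow]
  gcongr
  exact hx i

theorem stmt14 (m n s : ℕ) (hs : 0 < s)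
    (A : Matrix (Fin m) (Fin s) ℂ) (B : Matrix (Fin n) (Fin s) ℂ)
    (a b xmin : ℝ) (ha : 0 < a) (hb : 0 < b) (hxmin : 0 < xmin)
    (hA : ∀ z : EuclideanSpace ℂ (Fin s), a * ‖z‖ ≤ ‖Matrix.toEuclideanLin A z‖)
    (hB : ∀ z : EuclideanSpace ℂ (Fin s), b * ‖z‖ ≤ ‖Matrix.toEuclideanLin B z‖)
    (x : Fin s → ℂ) (hx : ∀ j, xmin ≤ ‖x j‖) :
    ∃ h : s - 1 < n,
      a * b * xmin ≤ svals (A * Matrix.diagonal x * Bᵀ) ⟨s - 1, h⟩ := by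
  set V := LinearMap.range (toEuclideanLin (B.map star))
  have hinj : Function.Injective (toEuclideanLin (B.map star)) :=
    LinearMap.injective_of_mul_norm_le _ hb (B.mul_norm_le_norm_toEuclideanLin_map_star hB)
  have hV : Module.finrank ℂ V = s := by
    rw [LinearMap.finrank_range_of_inj hinj, finrank_euclideanSpace_fin]
  have hsn : s ≤ n := by
    simpa [hV] using V.finrank_le
  refine ⟨by omega, le_svals_of_forall_mem_le_norm _ _ V (by simp only [hV]; omega) ?_⟩
  rintro _ ⟨w, rfl⟩
  set z := toEuclideanLin (B.map star) w
  calc a * b * xmin * ‖z‖ = a * (xmin * (b * ‖z‖)) := by ring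
    _ ≤ a * (xmin * ‖toEuclideanLin Bᵀ z‖) := by
      gcongr; exact B.mul_norm_le_norm_toEuclideanLin_transpose hB w
    _ ≤ a * ‖toEuclideanLin (diagonal x) (toEuclideanLin Bᵀ z)‖ := by
      gcongr; exact mul_norm_le_norm_toEuclideanLin_diagonal hxmin.le hx _
    _ ≤ ‖toEuclideanLin (A * diagonal x * Bᵀ) z‖ := by
      simpa only [toLpLin_mul_same, LinearMap.comp_apply] using hA _
end

section
/- (Elsner's eigenvalue perturbation theorem) Let A, B \in \mathbb{C}^{n \times n}. Then the Hausdorff distance between the spectra of A and B satisfies \mu_H(\sigma(A), \sigma(B)) \le (\|A\|_2 + \|B\|_2)^{1 - 1/n} \|A - B\|_2^{1/n}. -/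
/-!
Let `z` be an eigenvalue of `T` with eigenvector `v`, so that `(z - S) v = (T - S) v`. For any
operator `R`, `‖det R‖ * ‖v‖ ≤ ‖R v‖ * ‖R‖ ^ (n - 1)`: `‖det R‖` is the product of the singular
values of `R`, the smallest of which is at most `‖R v‖ / ‖v‖` (its square is the minimum of the
Rayleigh quotient of `R† R`) and all of which are at most `‖R‖`. Since `det (z - S) = ∏ (z - μᵢ)` over the
eigenvalues `μᵢ` of `S`, the nearest one satisfies
`‖z - μ‖ ^ n ≤ ‖T - S‖ * (‖S‖ + ‖T‖) ^ (n - 1)`, using `‖z‖ ≤ ‖T‖`.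
-/

open scoped Real BigOperators
open Matrix

open Module Polynomial

theorem Polynomial.exists_mem_roots_norm_sub_pow_natDegree_le {K : Type*} [NormedField K]
    [IsAlgClosed K] {p : K[X]} (hp : p.Monic) (hdeg : 0 < p.natDegree) (z : K) :
    ∃ μ ∈ p.roots, ‖z - μ‖ ^ p.natDegree ≤ ‖p.eval z‖ := by
  classical
  have hcard : Multiset.card p.roots = p.natDegree := IsAlgClosed.card_roots_eq_natDegree
  have hne : p.roots.toFinset.Nonempty := by
    rwa [Multiset.toFinset_nonempty, ← Multiset.card_pos, hcard]
  obtain ⟨μ, hμ, hmin⟩ := p.roots.toFinset.exists_min_image (fun ν => ‖z - ν‖) hne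
  refine ⟨μ, Multiset.mem_toFinset.mp hμ, ?_⟩
  rw [(IsAlgClosed.splits p).eval_eq_prod_roots_of_monic hp, ← hcard,
    ← normHom_apply (Multiset.prod _), map_multiset_prod, Multiset.map_map,
    ← Multiset.prod_replicate, ← Multiset.map_const']
  exact Multiset.prod_map_le_prod_map₀ _ _ (fun _ _ => norm_nonneg _)
    fun ν hν => hmin ν (Multiset.mem_toFinset.mpr hν)

lemma Real.le_rpow_mul_rpow_of_pow_le_mul_pow {d a b : ℝ} {n : ℕ} (hn : 0 < n) (hd : 0 ≤ d)
    (ha : 0 ≤ a) (hb : 0 ≤ b) (h : d ^ n ≤ b * a ^ (n - 1)) :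
    d ≤ a ^ (1 - 1 / (n : ℝ)) * b ^ (1 / (n : ℝ)) := by
  have hn' : (n : ℝ) ≠ 0 := Nat.cast_ne_zero.mpr hn.ne'
  calc d = (d ^ n) ^ (1 / (n : ℝ)) := by
        rw [← Real.rpow_natCast, ← Real.rpow_mul hd, mul_one_div_cancel hn', Real.rpow_one]
    _ ≤ (b * a ^ (n - 1)) ^ (1 / (n : ℝ)) := by gcongr
    _ = a ^ (1 - 1 / (n : ℝ)) * b ^ (1 / (n : ℝ)) := by
        rw [Real.mul_rpow hb (by positivity), ← Real.rpow_natCast, ← Real.rpow_mul ha,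
          Nat.cast_sub hn, Nat.cast_one, mul_comm]
        congr 2
        field_simp

namespace LinearMap

variable {𝕜 E F : Type*} [RCLike 𝕜] [NormedAddCommGroup E] [InnerProductSpace 𝕜 E]
  [FiniteDimensional 𝕜 E] [NormedAddCommGroup F] [InnerProductSpace 𝕜 F] [FiniteDimensional 𝕜 F]

lemma re_inner_adjoint_comp_self_apply (T : E →ₗ[𝕜] F) (x : E) :
    RCLike.re (inner 𝕜 ((adjoint T ∘ₗ T) x) x) = ‖T x‖ ^ 2 := by
  rw [comp_apply, adjoint_inner_left, inner_self_eq_norm_sq]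

lemma singularValues_finrank_sub_one_mul_norm_le (T : E →ₗ[𝕜] F) (x : E) :
    T.singularValues (finrank 𝕜 E - 1) * ‖x‖ ≤ ‖T x‖ := by
  rcases eq_or_ne x 0 with rfl | hx
  · simp
  have : Nontrivial E := ⟨⟨x, 0, hx⟩⟩
  have hS := T.isSymmetric_adjoint_comp_self
  obtain ⟨i, hi⟩ := hS.exists_eigenvalues_eq rfl hS.hasEigenvalue_iInf_of_finiteDimensional
  have hlast : T.singularValues (finrank 𝕜 E - 1) ^ 2 ≤ hS.eigenvalues rfl i := by
    rw [T.sq_singularValues_of_lt rfl (Nat.sub_one_lt finrank_pos.ne')]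
    exact hS.eigenvalues_antitone rfl (Fin.le_def.mpr (Nat.le_sub_one_of_lt i.2))
  have hrayleigh : hS.eigenvalues rfl i ≤ ‖T x‖ ^ 2 / ‖x‖ ^ 2 := by
    rw [RCLike.ofReal_inj.mp hi, ← re_inner_adjoint_comp_self_apply]
    refine ciInf_le ⟨0, ?_⟩ (⟨x, hx⟩ : {y : E // y ≠ 0})
    rintro _ ⟨y, rfl⟩
    dsimp only
    rw [re_inner_adjoint_comp_self_apply]
    positivity
  refine le_of_pow_le_pow_left₀ two_ne_zero (norm_nonneg _) ?_
  rw [mul_pow, ← le_div_iff₀ (by positivity)]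
  exact hlast.trans hrayleigh

end LinearMap

namespace ContinuousLinearMap

section RCLike

variable {𝕜 E F : Type*} [RCLike 𝕜] [NormedAddCommGroup E] [InnerProductSpace 𝕜 E]
  [FiniteDimensional 𝕜 E] [NormedAddCommGroup F] [InnerProductSpace 𝕜 F] [FiniteDimensional 𝕜 F]

theorem singularValues_le_opNorm (T : E →L[𝕜] F) (i : ℕ) :
    (T : E →ₗ[𝕜] F).singularValues i ≤ ‖T‖ := by
  rcases lt_or_ge i (finrank 𝕜 E) with hi | hi
  · obtain ⟨v, hv⟩ :=
      (T : E →ₗ[𝕜] F).hasEigenvalue_adjoint_comp_self_sq_singularValues hi |>.exists_hasEigenvector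
    have hv0 : 0 < ‖v‖ := norm_pos_iff.mpr hv.2
    have heig : (T : E →ₗ[𝕜] F).singularValues i ^ 2 * ‖v‖ ^ 2 = ‖T v‖ ^ 2 := by
      rw [show ‖T v‖ = ‖(T : E →ₗ[𝕜] F) v‖ from rfl, ← LinearMap.re_inner_adjoint_comp_self_apply,
        hv.apply_eq_smul, inner_smul_left, inner_self_eq_norm_sq_to_K]
      norm_cast
      simp
    have : (T : E →ₗ[𝕜] F).singularValues i * ‖v‖ ≤ ‖T‖ * ‖v‖ := by
      refine le_of_pow_le_pow_left₀ two_ne_zero (by positivity) ?_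
      rw [mul_pow, heig]
      exact pow_le_pow_left₀ (norm_nonneg _) (T.le_opNorm v) 2
    exact le_of_mul_le_mul_right this hv0
  · rw [LinearMap.singularValues_of_finrank_le _ hi]
    exact norm_nonneg T

theorem norm_det_mul_norm_le (T : E →L[𝕜] E) (x : E) :
    ‖(T : E →ₗ[𝕜] E).det‖ * ‖x‖ ≤ ‖T x‖ * ‖T‖ ^ (finrank 𝕜 E - 1) := by
  rw [← LinearMap.normDet_eq_norm_det, LinearMap.normDet_eq_prod_singularValues]
  have hlast := (T : E →ₗ[𝕜] E).singularValues_finrank_sub_one_mul_norm_le x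
  cases h : finrank 𝕜 E with
  | zero =>
    have : Subsingleton E := finrank_zero_iff.mp h
    simp [Subsingleton.elim x 0]
  | succ m =>
    rw [h, Nat.add_sub_cancel] at hlast
    rw [Finset.prod_range_succ, Nat.add_sub_cancel, mul_assoc, mul_comm (‖T x‖)]
    refine mul_le_mul ?_ hlast
      (mul_nonneg (LinearMap.singularValues_nonneg _ m) (norm_nonneg x)) (by positivity)
    calc ∏ i ∈ Finset.range m, (T : E →ₗ[𝕜] E).singularValues i
        ≤ ∏ _i ∈ Finset.range m, ‖T‖ := Finset.prod_le_prod
          (fun i _ => LinearMap.singularValues_nonneg _ i) fun i _ => T.singularValues_le_opNorm i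
      _ = ‖T‖ ^ m := by rw [Finset.prod_const, Finset.card_range]

end RCLike

section Complex

variable {E : Type*} [NormedAddCommGroup E] [InnerProductSpace ℂ E] [FiniteDimensional ℂ E]

theorem exists_mem_spectrum_norm_sub_pow_le (S T : E →L[ℂ] E) {z : ℂ}
    (hz : z ∈ spectrum ℂ T) :
    ∃ μ ∈ spectrum ℂ S, ‖z - μ‖ ^ finrank ℂ E ≤ ‖T - S‖ * (‖S‖ + ‖T‖) ^ (finrank ℂ E - 1) := by
  have hzT : z ∈ spectrum ℂ (T : E →ₗ[ℂ] E) := by rwa [← spectrum_eq]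
  obtain ⟨v, hv⟩ := (Module.End.hasEigenvalue_iff_mem_spectrum.mpr hzT).exists_hasEigenvector
  have : Nontrivial E := ⟨⟨v, 0, hv.2⟩⟩
  have hv0 : 0 < ‖v‖ := norm_pos_iff.mpr hv.2
  set R : E →L[ℂ] E := z • 1 - S
  have hdet : (S : E →ₗ[ℂ] E).charpoly.eval z = (R : E →ₗ[ℂ] E).det := by
    rw [LinearMap.eval_charpoly]
    congr 1
  have hdeg : (S : E →ₗ[ℂ] E).charpoly.natDegree = finrank ℂ E := LinearMap.charpoly_natDegree _
  obtain ⟨μ, hμ, hclose⟩ := Polynomial.exists_mem_roots_norm_sub_pow_natDegree_le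
    (S : E →ₗ[ℂ] E).charpoly_monic (hdeg ▸ finrank_pos) z
  rw [hdeg, hdet] at hclose
  refine ⟨μ, ?_, ?_⟩
  · rw [spectrum_eq, Module.End.mem_spectrum_iff_isRoot_charpoly]
    exact Polynomial.isRoot_of_mem_roots hμ
  have hRv : R v = (T - S) v := by
    simp [R, ← coe_coe T, hv.apply_eq_smul]
  have hR : ‖R‖ ≤ ‖S‖ + ‖T‖ := by
    calc ‖R‖ ≤ ‖z • (1 : E →L[ℂ] E)‖ + ‖S‖ := norm_sub_le _ _
      _ ≤ ‖T‖ + ‖S‖ := by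
        gcongr
        calc ‖z • (1 : E →L[ℂ] E)‖ = ‖z‖ := by rw [norm_smul, norm_one, mul_one]
          _ ≤ ‖T‖ := spectrum.norm_le_norm_of_mem hz
      _ = ‖S‖ + ‖T‖ := add_comm _ _
  have key : ‖z - μ‖ ^ finrank ℂ E * ‖v‖ ≤ ‖T - S‖ * (‖S‖ + ‖T‖) ^ (finrank ℂ E - 1) * ‖v‖ :=
    calc ‖z - μ‖ ^ finrank ℂ E * ‖v‖ ≤ ‖(R : E →ₗ[ℂ] E).det‖ * ‖v‖ := by gcongr
      _ ≤ ‖R v‖ * ‖R‖ ^ (finrank ℂ E - 1) := R.norm_det_mul_norm_le v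
      _ ≤ ‖T - S‖ * ‖v‖ * (‖S‖ + ‖T‖) ^ (finrank ℂ E - 1) := by
          rw [hRv]
          gcongr
          exact le_opNorm _ _
      _ = ‖T - S‖ * (‖S‖ + ‖T‖) ^ (finrank ℂ E - 1) * ‖v‖ := by ring
  exact le_of_mul_le_mul_right key hv0

theorem exists_mem_spectrum_dist_le (S T : E →L[ℂ] E) {z : ℂ} (hz : z ∈ spectrum ℂ T) :
    ∃ μ ∈ spectrum ℂ S, dist z μ ≤
      (‖S‖ + ‖T‖) ^ (1 - 1 / (finrank ℂ E : ℝ)) * ‖S - T‖ ^ (1 / (finrank ℂ E : ℝ)) := by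
  have : Nontrivial E := by
    by_contra h
    rw [not_nontrivial_iff_subsingleton] at h
    simp [spectrum.of_subsingleton] at hz
  obtain ⟨μ, hμ, hle⟩ := exists_mem_spectrum_norm_sub_pow_le S T hz
  refine ⟨μ, hμ, ?_⟩
  rw [dist_eq_norm, norm_sub_rev S]
  exact Real.le_rpow_mul_rpow_of_pow_le_mul_pow finrank_pos (norm_nonneg _) (by positivity)
    (norm_nonneg _) hle

theorem hausdorffDist_spectrum_le (S T : E →L[ℂ] E) :
    Metric.hausdorffDist (spectrum ℂ S) (spectrum ℂ T) ≤
      (‖S‖ + ‖T‖) ^ (1 - 1 / (finrank ℂ E : ℝ)) * ‖S - T‖ ^ (1 / (finrank ℂ E : ℝ)) := by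
  refine Metric.hausdorffDist_le_of_mem_dist (by positivity) (fun z hz => ?_)
    fun z hz => exists_mem_spectrum_dist_le S T hz
  rw [add_comm, norm_sub_rev]
  exact exists_mem_spectrum_dist_le T S hz

end Complex

end ContinuousLinearMap

theorem stmt16_general (n : ℕ) (A B : Matrix (Fin n) (Fin n) ℂ) :
    Metric.hausdorffDist (spectrum ℂ A) (spectrum ℂ B) ≤
      (sNorm A + sNorm B) ^ ((1 : ℝ) - 1 / n) * sNorm (A - B) ^ ((1 : ℝ) / n) := by
  have h := ContinuousLinearMap.hausdorffDist_spectrum_le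
    (toEuclideanCLM (n := Fin n) (𝕜 := ℂ) A) (toEuclideanCLM (n := Fin n) (𝕜 := ℂ) B)
  rwa [finrank_euclideanSpace_fin, AlgEquiv.spectrum_eq, AlgEquiv.spectrum_eq, ← map_sub] at h

theorem stmt16 (n : ℕ) (hn : 0 < n) (A B : Matrix (Fin n) (Fin n) ℂ) :
    Metric.hausdorffDist (spectrum ℂ A) (spectrum ℂ B) ≤
      (sNorm A + sNorm B) ^ ((1 : ℝ) - 1 / n) * sNorm (A - B) ^ ((1 : ℝ) / n) :=
  stmt16_general n A B
end
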